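/- arXiv:1710.06968 — 7 statements merged into one kernel-verified Lean document; each statement's English description precedes it below -/
import Mathlib

section
/- Let δ: G → W be a function from a groupoid G to a Coxeter group W satisfying (WG1) (δ of every identity edge is 1) and (WG2') (the local triangle inequality). Then for any edge g ∈ G with δ(g) ∈ S, we have δ(g⁻¹) = δ(g). -/
open CategoryTheory List

variable {B : Type*} {W : Type*} [Group W] {M : CoxeterMatrix B}
variable {G : Type*} [Groupoid G]

/-- The Bruhat order on a Coxeter group, defined via the subword property:
`v ≤ w` iff some reduced word for `w` has a sublist with product `v`. -/
def BruhatLE (cs : CoxeterSystem M W) (v w : W) : Prop :=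
  ∃ ω : List B, cs.IsReduced ω ∧ cs.wordProd ω = w ∧
    ∃ ω' : List B, ω'.Sublist ω ∧ cs.wordProd ω' = v

/-- (WG1): `δ` of every identity edge is `1`. -/
def WG1 (δ : ∀ ⦃x y : G⦄, (x ⟶ y) → W) : Prop :=
  ∀ x : G, δ (𝟙 x) = 1

/-- (WG2): the triangle inequality `δ(gh) ≥ δ(g)δ(h)` in the Bruhat order. -/
def WG2 (cs : CoxeterSystem M W) (δ : ∀ ⦃x y : G⦄, (x ⟶ y) → W) : Prop :=
  ∀ ⦃x y z : G⦄ (g : x ⟶ y) (h : y ⟶ z), BruhatLE cs (δ g * δ h) (δ (g ≫ h))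

/-- (WG2'): the local triangle inequality. -/
def WG2' (cs : CoxeterSystem M W) (δ : ∀ ⦃x y : G⦄, (x ⟶ y) → W) : Prop :=
  ∀ ⦃x y z : G⦄ (g : x ⟶ y) (h : x ⟶ z) (i : B), δ (Groupoid.inv g ≫ h) = cs.simple i →
    (cs.IsRightDescent (δ g) i → δ h = δ g ∨ δ h = δ g * cs.simple i) ∧
    (¬ cs.IsRightDescent (δ g) i → δ h = δ g * cs.simple i)

/-- (WG3): the geodesic extension property. -/
def WG3 (cs : CoxeterSystem M W) (δ : ∀ ⦃x y : G⦄, (x ⟶ y) → W) : Prop :=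
  ∀ ⦃x y : G⦄ (g : x ⟶ y) (i : B), cs.IsRightDescent (δ g) i →
    ∃ (z : G) (h : x ⟶ z), δ (Groupoid.inv h ≫ g) = cs.simple i ∧ δ h = δ g * cs.simple i

/-- `δ` is weak: from every chamber there issues an edge of each simple length. -/
def WeakFn (cs : CoxeterSystem M W) (δ : ∀ ⦃x y : G⦄, (x ⟶ y) → W) : Prop :=
  ∀ (x : G) (i : B), ∃ (y : G) (g : x ⟶ y), δ g = cs.simple i

/-- The list of `W`-lengths of the edges of a path (a potential gallery). -/
def pathWord (δ : ∀ ⦃x y : G⦄, (x ⟶ y) → W) : ∀ {x y : G}, Quiver.Path x y → List W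
  | _, _, Quiver.Path.nil => []
  | _, _, Quiver.Path.cons p e => pathWord δ p ++ [δ e]

theorem WG2'.eq_simple_of_eq_one {cs : CoxeterSystem M W} {δ : ∀ ⦃x y : G⦄, (x ⟶ y) → W}
    (h2 : WG2' cs δ) {x y z : G} {g : x ⟶ y} {h : x ⟶ z} {i : B}
    (hgh : δ (Groupoid.inv g ≫ h) = cs.simple i) (hh : δ h = 1) :
    δ g = cs.simple i := by
  have eq_simple : δ h = δ g * cs.simple i → δ g = cs.simple i := fun h' ↦ by
    rw [hh] at h'
    rw [eq_inv_of_mul_eq_one_left h'.symm, cs.inv_simple]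
  by_cases hd : cs.IsRightDescent (δ g) i
  · -- `δ h = δ g` is impossible: `1` has no right descent.
    rcases (h2 g h i hgh).1 hd with h' | h'
    · rw [← h', hh] at hd
      exact absurd hd (cs.not_isRightDescent_one i)
    · exact eq_simple h'
  · exact eq_simple ((h2 g h i hgh).2 hd)

/-- If `δ` satisfies (WG1) and (WG2'), then `δ(g⁻¹) = δ(g)` for every edge `g`
whose `W`-length is a simple reflection. -/
theorem stmt0 (cs : CoxeterSystem M W) (δ : ∀ ⦃x y : G⦄, (x ⟶ y) → W)
    (h1 : WG1 δ) (h2 : WG2' cs δ)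
    ⦃x y : G⦄ (g : x ⟶ y) (i : B) (hg : δ g = cs.simple i) :
    δ (Groupoid.inv g) = δ g := by
  rw [hg]
  refine h2.eq_simple_of_eq_one (h := 𝟙 y) ?_ (h1 y)
  simpa only [Groupoid.inv_eq_inv, IsIso.inv_inv, Category.comp_id] using hg
end

section
/- Let δ: G → W satisfy (WG1) and (WG2). Let g, h ∈ G be composable edges with δ(g), δ(h) ∈ S. If δ(g) = δ(h) = s, then δ(gh) ∈ {1, s}. -/
open CategoryTheory List

variable {B : Type*} {W : Type*} [Group W] {M : CoxeterMatrix B}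
variable {G : Type*} [Groupoid G]

theorem BruhatLE.eq_one {cs : CoxeterSystem M W} {v : W} (hv : BruhatLE cs v 1) : v = 1 := by
  obtain ⟨ω, hred, hω, ω', hsub, rfl⟩ := hv
  have hnil : ω = [] := by
    rw [← List.length_eq_zero_iff, ← hred, hω, cs.length_one]
  subst hnil
  rw [List.sublist_nil.mp hsub, cs.wordProd_nil]

theorem BruhatLE.eq_one_or_eq_simple {cs : CoxeterSystem M W} {v : W} {i : B}
    (hv : BruhatLE cs v (cs.simple i)) : v = 1 ∨ v = cs.simple i := by
  obtain ⟨ω, hred, hω, ω', hsub, rfl⟩ := hv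
  obtain ⟨j, rfl⟩ : ∃ j, ω = [j] := by
    rw [← List.length_eq_one_iff, ← hred, hω, cs.length_simple]
  rcases List.sublist_singleton.mp hsub with rfl | rfl
  · exact Or.inl cs.wordProd_nil
  · exact Or.inr hω

section WG

variable {cs : CoxeterSystem M W} {δ : ∀ ⦃x y : G⦄, (x ⟶ y) → W}

theorem WG2.delta_inv (h1 : WG1 δ) (h2 : WG2 cs δ) {x y : G} (f : x ⟶ y) :
    δ (Groupoid.inv f) = (δ f)⁻¹ := by
  have h := h2 f (Groupoid.inv f)
  rw [Groupoid.comp_inv, h1] at h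
  exact eq_inv_of_mul_eq_one_right h.eq_one

theorem WG2.bruhatLE_delta_comp_mul_inv (h1 : WG1 δ) (h2 : WG2 cs δ) {x y z : G}
    (g : x ⟶ y) (h : y ⟶ z) : BruhatLE cs (δ (g ≫ h) * (δ h)⁻¹) (δ g) := by
  have key := h2 (g ≫ h) (Groupoid.inv h)
  rwa [Category.assoc, Groupoid.comp_inv, Category.comp_id, h2.delta_inv h1] at key

end WG

/-- If `δ` satisfies (WG1) and (WG2), and `g`, `h` are composable edges with
`δ(g) = δ(h) = s` a simple reflection, then `δ(gh) ∈ {1, s}`. -/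
theorem stmt3 (cs : CoxeterSystem M W) (δ : ∀ ⦃x y : G⦄, (x ⟶ y) → W)
    (h1 : WG1 δ) (h2 : WG2 cs δ) ⦃x y z : G⦄ (g : x ⟶ y) (h : y ⟶ z) (i : B)
    (hg : δ g = cs.simple i) (hh : δ h = cs.simple i) :
    δ (g ≫ h) = 1 ∨ δ (g ≫ h) = cs.simple i := by
  have key := h2.bruhatLE_delta_comp_mul_inv h1 g h
  rw [hg, hh, cs.inv_simple] at key
  rcases key.eq_one_or_eq_simple with hone | hs
  · exact Or.inr ((mul_eq_one_iff_eq_inv.mp hone).trans (cs.inv_simple i))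
  · exact Or.inl (mul_eq_right.mp hs)
end

section
/- Let δ: G → W be a function satisfying (WG1) and (WG2). Then δ satisfies the local triangle inequality (WG2'): for all edges g, h with g⁻¹h defined and δ(g⁻¹h) = s ∈ S, putting w = δ(g), if ws < w then δ(h) ∈ {w, ws}, and if ws > w then δ(h) = ws. -/
open CategoryTheory List

variable {B : Type*} {W : Type*} [Group W] {M : CoxeterMatrix B}
variable {G : Type*} [Groupoid G]

/-! From (WG1) and (WG2) one gets `δ(g⁻¹) = δ(g)⁻¹`, so with `w = δ g`, `v = δ h` and
`s = δ(g⁻¹h)` both `ws ≤ v` and `vs ≤ w` hold. Comparing lengths settles every case except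
`ws < w`, `ℓ v = ℓ w`, `vs ⋖ w`, where the lifting property forces `v = w`. As the Bruhat order
is defined by subwords of a single reduced word, this rests on the strong exchange property,
proved with the reflection cocycle `W → (W → 𝔽₂) ⋊ W`, which counts mod 2 how often each
reflection occurs in a left inversion sequence. -/

namespace CoxeterSystem

open scoped Classical

variable (cs : CoxeterSystem M W)

def conjArrow : W →* MulAut (W → Multiplicative (ZMod 2)) :=
  (mulAutArrow : ConjAct W →* _).comp ConjAct.toConjAct.toMonoidHom

theorem conjArrow_apply (u : W) (f : W → Multiplicative (ZMod 2)) (x : W) :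
    conjArrow u f x = f (u⁻¹ * x * u) := by
  change f ((ConjAct.toConjAct u)⁻¹ • x) = _
  simp [ConjAct.smul_def]

noncomputable def parityIndicator (t : W) : W → Multiplicative (ZMod 2) :=
  Pi.mulSingle t (Multiplicative.ofAdd 1)

theorem conjArrow_parityIndicator (u t : W) :
    conjArrow u (parityIndicator t) = parityIndicator (u * t * u⁻¹) := by
  ext x
  simp only [conjArrow_apply, parityIndicator, Pi.mulSingle_apply]
  have : u⁻¹ * x * u = t ↔ x = u * t * u⁻¹ := by
    constructor <;> rintro rfl <;> group
  simp only [this]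

noncomputable def reflectionCocycleGen (i : B) :
    (W → Multiplicative (ZMod 2)) ⋊[conjArrow] W :=
  ⟨parityIndicator (cs.simple i), cs.simple i⟩

theorem prod_map_reflectionCocycleGen (ω : List B) :
    (ω.map cs.reflectionCocycleGen).prod =
      ⟨((cs.leftInvSeq ω).map parityIndicator).prod, cs.wordProd ω⟩ := by
  induction ω with
  | nil => rfl
  | cons i ω ih =>
    rw [List.map_cons, List.prod_cons, ih]
    refine SemidirectProduct.ext ?_ (cs.wordProd_cons i ω).symm
    simp only [SemidirectProduct.mul_left, reflectionCocycleGen, leftInvSeq, List.map_cons,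
      List.prod_cons, List.map_map, map_list_prod]
    congr 2
    exact List.map_congr_left fun t _ => conjArrow_parityIndicator _ _

theorem leftInvSeq_alternatingWord_two_mul (i i' : B) (p : ℕ) :
    cs.leftInvSeq (alternatingWord i i' (2 * p)) =
      (List.range (2 * p)).map fun k => cs.simple i * (cs.simple i' * cs.simple i) ^ k := by
  refine List.ext_getElem (by simp) fun k hk _ => ?_
  rw [getElem_leftInvSeq_alternatingWord cs i i' p k (by simpa using hk),
    prod_alternatingWord_eq_mul_pow]
  simp [Nat.mul_add_div]

theorem prod_map_alternatingWord_two_mul {G : Type*} [Monoid G] (f : B → G) (i i' : B) (p : ℕ) :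
    ((alternatingWord i i' (2 * p)).map f).prod = (f i * f i') ^ p := by
  induction p with
  | zero => simp [alternatingWord]
  | succ p ih =>
    rw [Nat.mul_succ, alternatingWord_succ', alternatingWord_succ']
    simp [ih, pow_succ', mul_assoc]

theorem isLiftable_reflectionCocycleGen : M.IsLiftable cs.reflectionCocycleGen := by
  intro i i'
  rw [← prod_map_alternatingWord_two_mul, prod_map_reflectionCocycleGen,
    leftInvSeq_alternatingWord_two_mul, prod_alternatingWord_eq_mul_pow]
  have hperiod : ∀ k, cs.simple i * (cs.simple i' * cs.simple i) ^ (M i i' + k) =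
      cs.simple i * (cs.simple i' * cs.simple i) ^ k := by
    intro k
    rw [pow_add, M.symmetric, cs.simple_mul_simple_pow, one_mul]
  refine SemidirectProduct.ext ?_ ?_
  · rw [two_mul, List.range_add, List.map_append, List.map_map, Function.comp_def]
    simp only [hperiod, List.map_append, List.prod_append]
    exact funext fun x => CharTwo.add_self_eq_zero (_ : Multiplicative (ZMod 2)).toAdd
  · simp [cs.simple_mul_simple_pow]

/-- The reflection cocycle: the left component of the image of `π ω` is the mod-2 count of
each reflection in `lis ω` (Björner–Brenti, Thm. 1.4.3). -/
noncomputable def reflectionCocycle : W →* (W → Multiplicative (ZMod 2)) ⋊[conjArrow] W :=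
  cs.lift ⟨_, cs.isLiftable_reflectionCocycleGen⟩

theorem reflectionCocycle_wordProd (ω : List B) :
    cs.reflectionCocycle (cs.wordProd ω) =
      ⟨((cs.leftInvSeq ω).map parityIndicator).prod, cs.wordProd ω⟩ := by
  rw [← prod_map_reflectionCocycleGen, wordProd, map_list_prod, List.map_map]
  congr 2
  exact funext (cs.lift_apply_simple cs.isLiftable_reflectionCocycleGen)

theorem reflectionCocycle_right (w : W) : (cs.reflectionCocycle w).right = w := by
  obtain ⟨ω, -, rfl⟩ := cs.exists_isReduced w
  rw [reflectionCocycle_wordProd]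

theorem reflectionCocycle_left_apply_of_not_mem {ω : List B} {t : W}
    (ht : t ∉ cs.leftInvSeq ω) : (cs.reflectionCocycle (cs.wordProd ω)).left t = 1 := by
  rw [reflectionCocycle_wordProd]
  dsimp only
  rw [Pi.list_prod_apply, List.map_map]
  refine List.prod_eq_one fun z hz => ?_
  obtain ⟨u, hu, rfl⟩ := List.mem_map.mp hz
  exact Pi.mulSingle_eq_of_ne (ne_of_mem_of_not_mem hu ht).symm _

theorem reflectionCocycle_left_apply_self {t : W} (ht : cs.IsReflection t) :
    (cs.reflectionCocycle t).left t = Multiplicative.ofAdd 1 := by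
  obtain ⟨v, i, rfl⟩ := ht
  have hgen : cs.reflectionCocycle (cs.simple i) = cs.reflectionCocycleGen i :=
    cs.lift_apply_simple cs.isLiftable_reflectionCocycleGen i
  -- the contributions of `reflectionCocycle v` cancel, the coefficients being commutative
  simp only [map_mul, map_inv cs.reflectionCocycle, hgen, SemidirectProduct.mul_left,
    SemidirectProduct.mul_right, SemidirectProduct.inv_left, reflectionCocycle_right,
    reflectionCocycleGen, Pi.mul_apply, parityIndicator, MulAut.mul_apply, conjArrow_apply,
    Pi.inv_apply]
  simp [mul_assoc]

/-- The strong exchange property. If `t ∉ lis ω`, then `t` has odd parity in the cocycle of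
`t * π ω`, so it lies in the inversion sequence of a reduced word for `t * π ω` and would be a
left inversion of it too. -/
theorem mem_leftInvSeq_of_isLeftInversion {ω : List B} {t : W}
    (ht : cs.IsLeftInversion (cs.wordProd ω) t) : t ∈ cs.leftInvSeq ω := by
  by_contra hmem
  obtain ⟨τ, hτ, hτw⟩ := cs.exists_isReduced (t * cs.wordProd ω)
  have hodd : (cs.reflectionCocycle (cs.wordProd τ)).left t = Multiplicative.ofAdd 1 := by
    rw [← hτw, map_mul, SemidirectProduct.mul_left, Pi.mul_apply,
      reflectionCocycle_left_apply_self cs ht.1, reflectionCocycle_right, conjArrow_apply,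
      ht.1.inv, ht.1.mul_self, one_mul, reflectionCocycle_left_apply_of_not_mem cs hmem, mul_one]
  have hτmem : t ∈ cs.leftInvSeq τ := by
    by_contra hτmem
    rw [reflectionCocycle_left_apply_of_not_mem cs hτmem] at hodd
    exact absurd hodd (by decide)
  have hlt := (cs.isLeftInversion_of_mem_leftInvSeq hτ hτmem).2
  rw [← hτw, ← mul_assoc, ht.1.mul_self, one_mul] at hlt
  exact absurd ht.2 (by omega)

end CoxeterSystem

theorem List.Sublist.exists_eq_eraseIdx {α : Type*} {l' l : List α} (h : l' <+ l)
    (hlen : l'.length + 1 = l.length) : ∃ j < l.length, l' = l.eraseIdx j := by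
  induction h with
  | slnil => simp at hlen
  | cons a h _ => exact ⟨0, by simp, h.eq_of_length (by simpa using hlen)⟩
  | cons_cons a _ ih =>
    obtain ⟨j, hj, rfl⟩ := ih (by simpa using hlen)
    exact ⟨j + 1, by simpa using hj, rfl⟩

namespace BruhatLE

variable {cs : CoxeterSystem M W} {u v w : W}

theorem length_le (h : BruhatLE cs v w) : cs.length v ≤ cs.length w := by
  obtain ⟨ω, hω, rfl, ω', hsub, rfl⟩ := h
  exact (cs.length_wordProd_le ω').trans (hsub.length_le.trans_eq hω.symm)

theorem eq_of_length_le (h : BruhatLE cs v w) (hlen : cs.length w ≤ cs.length v) : v = w := by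
  obtain ⟨ω, hω, rfl, ω', hsub, rfl⟩ := h
  have : ω.length ≤ ω'.length := hω ▸ hlen.trans (cs.length_wordProd_le ω')
  rw [hsub.eq_of_length_le this]

/-- In codimension one the subword property holds for every word of `w`, not just for the
reduced word witnessing `BruhatLE`. -/
theorem exists_eraseIdx (h : BruhatLE cs u w) (hlen : cs.length u + 1 = cs.length w)
    {ω : List B} (hω : cs.wordProd ω = w) :
    ∃ j < ω.length, cs.wordProd (ω.eraseIdx j) = u := by
  obtain ⟨ω₀, hω₀, rfl, ω', hsub, rfl⟩ := h
  have hlen' : ω'.length + 1 = ω₀.length := by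
    have := cs.length_wordProd_le ω'
    have := hsub.length_le
    have := hω₀.eq
    by_contra hne
    rw [hsub.eq_of_length (by omega)] at hlen
    omega
  obtain ⟨k, hk, rfl⟩ := hsub.exists_eq_eraseIdx hlen'
  set t := (cs.leftInvSeq ω₀).getD k 1 with ht_def
  have hmem : t ∈ cs.leftInvSeq ω₀ := by
    rw [ht_def, List.getD_eq_getElem _ _ (by simpa using hk)]
    exact List.getElem_mem _
  have ht : cs.IsLeftInversion (cs.wordProd ω) t := by
    refine ⟨cs.isReflection_of_mem_leftInvSeq ω₀ hmem, ?_⟩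
    rw [hω, cs.getD_leftInvSeq_mul_wordProd]
    omega
  obtain ⟨j, hj, htj⟩ := List.getElem_of_mem (cs.mem_leftInvSeq_of_isLeftInversion ht)
  refine ⟨j, by simpa using hj, ?_⟩
  rw [← List.getD_eq_getElem _ 1 hj] at htj
  rw [← cs.getD_leftInvSeq_mul_wordProd, htj, hω, cs.getD_leftInvSeq_mul_wordProd]

variable {i : B}

/-- A codimension-one instance of the lifting property. -/
theorem eq_of_mul_simple_of_isRightDescent (h : BruhatLE cs (u * cs.simple i) w)
    (hw : cs.IsRightDescent w i) (hus : cs.length (u * cs.simple i) + 1 = cs.length w)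
    (hu : cs.length u = cs.length w) : u = w := by
  obtain ⟨τ, hτ, hτw⟩ := cs.exists_isReduced (w * cs.simple i)
  have hτlen : τ.length + 1 = cs.length w := by
    rw [← hτ.eq, ← hτw, cs.isRightDescent_iff.mp hw]
  obtain ⟨j, hj, hτj⟩ := h.exists_eraseIdx hus (ω := τ ++ [i])
    (by rw [cs.wordProd_append, ← hτw, cs.wordProd_singleton, cs.simple_mul_simple_cancel_right])
  rw [List.length_append, List.length_singleton] at hj
  rcases Nat.lt_or_ge j τ.length with hjτ | hjτ
  · rw [List.eraseIdx_append_of_lt_length hjτ, cs.wordProd_append, cs.wordProd_singleton,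
      mul_left_inj] at hτj
    have := cs.length_wordProd_le (τ.eraseIdx j)
    rw [hτj, List.length_eraseIdx_of_lt hjτ] at this
    omega
  · rw [show j = τ.length by omega, List.eraseIdx_append_of_length_le le_rfl,
      Nat.sub_self, List.eraseIdx_cons_zero, List.append_nil, ← hτw] at hτj
    exact (mul_right_cancel hτj).symm

theorem eq_mul_simple_of_not_isRightDescent (h : BruhatLE cs (w * cs.simple i) v)
    (h' : BruhatLE cs (v * cs.simple i) w) (hw : ¬ cs.IsRightDescent w i) :
    v = w * cs.simple i := by
  have := h.length_le
  have := h'.length_le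
  have := cs.not_isRightDescent_iff.mp hw
  refine (h.eq_of_length_le ?_).symm
  rcases cs.length_mul_simple v i with hv | hv <;> omega

theorem eq_or_eq_mul_simple_of_isRightDescent (h : BruhatLE cs (w * cs.simple i) v)
    (h' : BruhatLE cs (v * cs.simple i) w) (hw : cs.IsRightDescent w i) :
    v = w ∨ v = w * cs.simple i := by
  have hle := h.length_le
  have hle' := h'.length_le
  have hws := cs.isRightDescent_iff.mp hw
  by_cases hvw : cs.length v ≤ cs.length (w * cs.simple i)
  · exact Or.inr (h.eq_of_length_le hvw).symm
  have hvs : cs.length (v * cs.simple i) + 1 = cs.length v :=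
    (cs.length_mul_simple v i).resolve_left (by omega)
  by_cases hvw' : cs.length v = cs.length w
  · exact Or.inl (h'.eq_of_mul_simple_of_isRightDescent hw (by omega) hvw')
  · have hvsw := h'.eq_of_length_le (by omega)
    rw [← hvsw, cs.simple_mul_simple_cancel_right] at hvw
    omega

end BruhatLE

theorem WG2.apply_inv {cs : CoxeterSystem M W} {δ : ∀ ⦃x y : G⦄, (x ⟶ y) → W}
    (h1 : WG1 δ) (h2 : WG2 cs δ) {x y : G} (g : x ⟶ y) : δ (Groupoid.inv g) = (δ g)⁻¹ := by
  have h := h2 g (Groupoid.inv g)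
  rw [Groupoid.comp_inv, h1] at h
  exact (inv_eq_of_mul_eq_one_right (h.eq_of_length_le (by simp))).symm

/-- If `δ` satisfies (WG1) and (WG2), then `δ` satisfies the local triangle
inequality (WG2'). -/
theorem stmt5 (cs : CoxeterSystem M W) (δ : ∀ ⦃x y : G⦄, (x ⟶ y) → W)
    (h1 : WG1 δ) (h2 : WG2 cs δ) :
    WG2' cs δ := by
  intro x y z g h i hgh
  have hle : BruhatLE cs (δ g * cs.simple i) (δ h) := by
    have := h2 g (Groupoid.inv g ≫ h)
    rwa [hgh, show g ≫ Groupoid.inv g ≫ h = h by simp] at this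
  have hle' : BruhatLE cs (δ h * cs.simple i) (δ g) := by
    have := h2 h (Groupoid.inv (Groupoid.inv g ≫ h))
    rwa [h2.apply_inv h1, hgh, cs.inv_simple,
      show h ≫ Groupoid.inv (Groupoid.inv g ≫ h) = g by simp] at this
  exact ⟨hle.eq_or_eq_mul_simple_of_isRightDescent hle',
    hle.eq_mul_simple_of_not_isRightDescent hle'⟩
end

section
/- Let δ: G → W satisfy (WG2') and (WG3), and let g = g₁⋯gₙ be a geodesic of an edge g ∈ G (a factorization into edges each of W-length in S whose type δ(g₁)⋯δ(gₙ) is a reduced word in W). Then δ(g) = δ(g₁)⋯δ(gₙ). -/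
open CategoryTheory List

variable {B : Type*} {W : Type*} [Group W] {M : CoxeterMatrix B}
variable {G : Type*} [Groupoid G]

theorem CoxeterSystem.IsReduced.of_append_singleton {cs : CoxeterSystem M W} {ω : List B} {i : B}
    (h : cs.IsReduced (ω ++ [i])) : cs.IsReduced ω := by
  simpa using h.take ω.length

theorem CoxeterSystem.not_isRightDescent_of_isReduced_append_singleton (cs : CoxeterSystem M W)
    {ω : List B} {i : B} (h : cs.IsReduced (ω ++ [i])) :
    ¬ cs.IsRightDescent (cs.wordProd ω) i := by
  rw [cs.not_isRightDescent_iff, ← cs.wordProd_singleton, ← cs.wordProd_append, h.eq,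
    h.of_append_singleton.eq, length_append, length_singleton]

theorem WG2'.delta_comp_of_not_isRightDescent {cs : CoxeterSystem M W}
    {δ : ∀ ⦃x y : G⦄, (x ⟶ y) → W} (h2 : WG2' cs δ) {x y z : G} (g : x ⟶ y) (e : y ⟶ z)
    {i : B} (he : δ e = cs.simple i) (hg : ¬ cs.IsRightDescent (δ g) i) :
    δ (g ≫ e) = δ g * cs.simple i :=
  (h2 g (g ≫ e) i (by simpa using he)).2 hg

-- Along a reduced gallery no step is a descent, so (WG2') forces each step to multiply `δ` by `s_i`.
theorem WG2'.delta_composePath_of_isReduced {cs : CoxeterSystem M W}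
    {δ : ∀ ⦃x y : G⦄, (x ⟶ y) → W} (h2 : WG2' cs δ) {x y : G} (p : Quiver.Path x y)
    {ω : List B} (hω : pathWord δ p = ω.map cs.simple) (hred : cs.IsReduced ω) (hne : ω ≠ []) :
    δ (composePath p) = cs.wordProd ω := by
  induction p generalizing ω with
  | nil =>
    rw [pathWord] at hω
    exact absurd (map_eq_nil_iff.mp hω.symm) hne
  | cons q e ih =>
    rw [pathWord] at hω
    obtain ⟨ω', b, rfl, hq, hb⟩ := map_eq_append_iff.mp hω.symm
    obtain ⟨i, rfl, he⟩ := map_eq_singleton_iff.mp hb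
    cases q with
    | nil =>
      obtain rfl : ω' = [] := by rw [pathWord] at hq; exact map_eq_nil_iff.mp hq
      simp [composePath, he]
    | cons q' e' =>
      have hω' : ω' ≠ [] := by rintro rfl; simp [pathWord] at hq
      have hq' := ih hq.symm hred.of_append_singleton hω'
      rw [composePath_cons, h2.delta_comp_of_not_isRightDescent _ e he.symm
        (hq' ▸ cs.not_isRightDescent_of_isReduced_append_singleton hred), hq',
        cs.wordProd_append, cs.wordProd_singleton]

theorem stmt6_general (cs : CoxeterSystem M W) (δ : ∀ ⦃x y : G⦄, (x ⟶ y) → W)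
    (h2 : WG2' cs δ) ⦃x y : G⦄ (g : x ⟶ y)
    (p : Quiver.Path x y) (hp : composePath p = g)
    (ω : List B) (hω : pathWord δ p = ω.map cs.simple)
    (hred : cs.IsReduced ω) (hne : ω ≠ []) :
    δ g = (pathWord δ p).prod := by
  rw [← hp, h2.delta_composePath_of_isReduced p hω hred hne, hω]
  rfl

/-- If `δ` satisfies (WG2') and (WG3) and `g = g₁⋯gₙ` is a geodesic of an edge `g`
(a nonempty factorization into edges whose types form a reduced word `ω`), then
`δ(g) = δ(g₁)⋯δ(gₙ)`. -/
theorem stmt6 (cs : CoxeterSystem M W) (δ : ∀ ⦃x y : G⦄, (x ⟶ y) → W)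
    (h2 : WG2' cs δ) (h3 : WG3 cs δ) ⦃x y : G⦄ (g : x ⟶ y)
    (p : Quiver.Path x y) (hp : composePath p = g)
    (ω : List B) (hω : pathWord δ p = ω.map cs.simple)
    (hred : cs.IsReduced ω) (hne : ω ≠ []) :
    δ g = (pathWord δ p).prod :=
  stmt6_general cs δ h2 (x := x) (y := y) g p hp ω hω hred hne
end

section
/- Let δ: G → W be a function satisfying (WG3). Let g ∈ G be an edge with δ(g) = w. Then for every reduced decomposition w = s₁⋯sₙ, there exists a geodesic g = g₁⋯gₙ of g with type s₁⋯sₙ, i.e., δ(gᵢ) = sᵢ for all i. -/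
open CategoryTheory List

variable {B : Type*} {W : Type*} [Group W] {M : CoxeterMatrix B}
variable {G : Type*} [Groupoid G]

/-!
Peel off the last letter: if `s₁⋯sₙ` is reduced for `δ(g)`, then `sₙ` is a right descent of
`δ(g)`, so (WG3) splits `g = h ≫ e` with `δ(e) = sₙ` and `δ(h) = s₁⋯sₙ₋₁`, again reduced.
Induction on `n` turns `h` into a geodesic of type `s₁⋯sₙ₋₁`, and appending `e` finishes.
-/

namespace CoxeterSystem

variable {cs : CoxeterSystem M W}

theorem wordProd_concat_mul_simple (ω : List B) (i : B) :
    cs.wordProd (ω ++ [i]) * cs.simple i = cs.wordProd ω := by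
  rw [wordProd_append, wordProd_singleton, simple_mul_simple_cancel_right]

theorem IsReduced.of_concat {ω : List B} {i : B} (hred : cs.IsReduced (ω ++ [i])) :
    cs.IsReduced ω := by
  simpa using hred.take ω.length

theorem IsReduced.isRightDescent_concat {ω : List B} {i : B} (hred : cs.IsReduced (ω ++ [i])) :
    cs.IsRightDescent (cs.wordProd (ω ++ [i])) i := by
  unfold IsRightDescent
  calc cs.length (cs.wordProd (ω ++ [i]) * cs.simple i)
      = cs.length (cs.wordProd ω) := by rw [wordProd_concat_mul_simple]
    _ ≤ ω.length := cs.length_wordProd_le ω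
    _ < (ω ++ [i]).length := by simp
    _ = cs.length (cs.wordProd (ω ++ [i])) := hred.symm

end CoxeterSystem

theorem WG3.exists_split_of_isReduced_concat {cs : CoxeterSystem M W}
    {δ : ∀ ⦃x y : G⦄, (x ⟶ y) → W} (h3 : WG3 cs δ) {x y : G} (g : x ⟶ y)
    {ω : List B} {i : B} (hred : cs.IsReduced (ω ++ [i])) (hw : cs.wordProd (ω ++ [i]) = δ g) :
    ∃ (z : G) (h : x ⟶ z), δ (Groupoid.inv h ≫ g) = cs.simple i ∧ δ h = cs.wordProd ω := by
  obtain ⟨z, h, he, hh⟩ := h3 g i (hw ▸ hred.isRightDescent_concat)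
  exact ⟨z, h, he, by rw [hh, ← hw, CoxeterSystem.wordProd_concat_mul_simple]⟩

/-- If `δ` satisfies (WG3), `g` is an edge with `δ(g) = w`, and `ω` is a nonempty
reduced decomposition of `w`, then there is a geodesic of `g` of type `ω`. -/
theorem stmt7 (cs : CoxeterSystem M W) (δ : ∀ ⦃x y : G⦄, (x ⟶ y) → W)
    (h3 : WG3 cs δ) ⦃x y : G⦄ (g : x ⟶ y)
    (ω : List B) (hred : cs.IsReduced ω) (hw : cs.wordProd ω = δ g) (hne : ω ≠ []) :
    ∃ p : Quiver.Path x y, composePath p = g ∧ pathWord δ p = ω.map cs.simple := by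
  induction ω using List.reverseRecOn generalizing x y g with
  | nil => exact absurd rfl hne
  | append_singleton ω i ih =>
    rcases eq_or_ne ω [] with rfl | hω
    · exact ⟨Quiver.Path.nil.cons g, by simp, by simp [pathWord, ← hw]⟩
    · obtain ⟨z, h, he, hh⟩ := h3.exists_split_of_isReduced_concat g hred hw
      obtain ⟨p, hp, hpw⟩ := ih h hred.of_concat hh.symm hω
      exact ⟨p.cons (Groupoid.inv h ≫ g), by simp [hp], by
        rw [pathWord, hpw, he, map_append, map_singleton]⟩
end

section
/- Let δ: G → W satisfy (WG1), (WG2'), and (WG3). Then for any edge g ∈ G, δ(g⁻¹) = δ(g)⁻¹. -/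
open CategoryTheory List

variable {B : Type*} {W : Type*} [Group W] {M : CoxeterMatrix B}
variable {G : Type*} [Groupoid G]

/-!
Starting from the tail `p = g⁻¹`, where `δ(g ≫ p) = 1`, shorten `p` one letter at a time with
(WG3), removing a right descent `s` of `δ p`. As long as `δ(g ≫ p) · δ(p)⁻¹` is a reduced product,
`s` is not a right descent of `δ(g ≫ p)`, so (WG2') forces `δ(g ≫ p) · s` as the value on the
shortened path and the product stays reduced with the same value. When `δ p` is a single
reflection, (WG2') applied to `g` itself gives `δ g = δ(g ≫ p) · δ(p)⁻¹ = δ(g⁻¹)⁻¹`.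
-/

namespace CoxeterSystem

variable (cs : CoxeterSystem M W)

theorem length_mul_inv_le_length_mul_simple_add (w u : W) (i : B) :
    cs.length (w * u⁻¹) ≤ cs.length (w * cs.simple i) + cs.length (u * cs.simple i) := by
  have hsplit : w * u⁻¹ = (w * cs.simple i) * (u * cs.simple i)⁻¹ := by
    rw [mul_inv_rev, cs.inv_simple, mul_assoc, cs.simple_mul_simple_cancel_left]
  rw [hsplit, ← cs.length_inv (u * cs.simple i)]
  exact cs.length_mul_le _ _

variable {cs}

theorem not_isRightDescent_of_length_add_le {w u : W} {i : B}
    (hlen : cs.length w + cs.length u ≤ cs.length (w * u⁻¹)) (hu : cs.IsRightDescent u i) :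
    ¬ cs.IsRightDescent w i := by
  intro hw
  have := cs.length_mul_inv_le_length_mul_simple_add w u i
  rw [cs.isRightDescent_iff] at hw hu
  omega

end CoxeterSystem

section

variable {cs : CoxeterSystem M W} {δ : ∀ ⦃x y : G⦄, (x ⟶ y) → W}

theorem WG2'.eq_mul_simple_of_not_isRightDescent (h2 : WG2' cs δ) {x y z : G} (a : x ⟶ y)
    (b : x ⟶ z) {i : B} (hab : δ (Groupoid.inv a ≫ b) = cs.simple i)
    (hb : ¬ cs.IsRightDescent (δ b) i) : δ a = δ b * cs.simple i := by
  obtain ⟨hdesc, hasc⟩ := h2 a b i hab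
  by_cases ha : cs.IsRightDescent (δ a) i
  · rcases hdesc ha with hba | hba
    · exact absurd (hba ▸ ha) hb
    · rw [hba, cs.simple_mul_simple_cancel_right]
  · rw [hasc ha, cs.simple_mul_simple_cancel_right]

theorem WG3.eq_comp_mul_inv_of_length_add_le (h2 : WG2' cs δ) (h3 : WG3 cs δ) {x y z : G}
    (g : x ⟶ y) (p : y ⟶ z) (hp : δ p ≠ 1)
    (hlen : cs.length (δ (g ≫ p)) + cs.length (δ p) ≤ cs.length (δ (g ≫ p) * (δ p)⁻¹)) :
    δ g = δ (g ≫ p) * (δ p)⁻¹ := by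
  obtain ⟨n, hn⟩ : ∃ n, cs.length (δ p) = n := ⟨_, rfl⟩
  induction n generalizing z p with
  | zero => exact absurd (cs.length_eq_zero_iff.mp hn) hp
  | succ n ih =>
    obtain ⟨i, hi⟩ := cs.exists_rightDescent_of_ne_one hp
    have hgp := CoxeterSystem.not_isRightDescent_of_length_add_le hlen hi
    obtain ⟨z', h, hhp, hh⟩ := h3 p i hi
    by_cases hh_one : δ h = 1
    · have hps : δ p = cs.simple i := by
        rw [← mul_one (δ p), ← cs.simple_mul_simple_self i, ← mul_assoc, ← hh, hh_one, one_mul]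
      have hg := h2.eq_mul_simple_of_not_isRightDescent g (g ≫ p)
        (by rw [← Category.assoc, Groupoid.inv_comp, Category.id_comp, hps]) hgp
      rw [hg, hps, cs.inv_simple]
    · have hgh : δ (g ≫ h) = δ (g ≫ p) * cs.simple i :=
        h2.eq_mul_simple_of_not_isRightDescent (g ≫ h) (g ≫ p)
          (by simpa [Groupoid.inv_eq_inv] using hhp) hgp
      have hword : δ (g ≫ h) * (δ h)⁻¹ = δ (g ≫ p) * (δ p)⁻¹ := by
        rw [hgh, hh, mul_inv_rev, cs.inv_simple, mul_assoc, cs.simple_mul_simple_cancel_left]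
      have hlen_gh : cs.length (δ (g ≫ h)) = cs.length (δ (g ≫ p)) + 1 := by
        rw [hgh, ← cs.not_isRightDescent_iff]; exact hgp
      have hlen_h : cs.length (δ h) = n := by
        have := cs.isRightDescent_iff.mp hi
        rw [hh]; omega
      rw [← hword]
      exact ih h hh_one (by rw [hword]; omega) hlen_h

theorem delta_eq_inv_delta_inv_of_ne_one (h1 : WG1 δ) (h2 : WG2' cs δ) (h3 : WG3 cs δ) {x y : G} (g : x ⟶ y)
    (hg : δ (Groupoid.inv g) ≠ 1) : δ g = (δ (Groupoid.inv g))⁻¹ := by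
  have h := h3.eq_comp_mul_inv_of_length_add_le h2 g (Groupoid.inv g) hg
    (by rw [Groupoid.comp_inv, h1, one_mul, cs.length_one, cs.length_inv, zero_add])
  rwa [Groupoid.comp_inv, h1, one_mul] at h

end

/-- If `δ` satisfies (WG1), (WG2'), and (WG3), then `δ(g⁻¹) = δ(g)⁻¹` for every edge. -/
theorem stmt8 (cs : CoxeterSystem M W) (δ : ∀ ⦃x y : G⦄, (x ⟶ y) → W)
    (h1 : WG1 δ) (h2 : WG2' cs δ) (h3 : WG3 cs δ) ⦃x y : G⦄ (g : x ⟶ y) :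
    δ (Groupoid.inv g) = (δ g)⁻¹ := by
  by_cases hg : δ g = 1
  · have hinv : δ (Groupoid.inv g) = 1 := by
      by_contra hinv
      exact hinv (by rw [← inv_inv (δ _), ← delta_eq_inv_delta_inv_of_ne_one h1 h2 h3 g hinv, hg, inv_one])
    rw [hinv, hg, inv_one]
  · simpa only [Groupoid.inv_eq_inv, IsIso.inv_inv] using delta_eq_inv_delta_inv_of_ne_one h1 h2 h3
      (Groupoid.inv g) (by simpa only [Groupoid.inv_eq_inv, IsIso.inv_inv] using hg)
end

section
/- Let δ: G → W satisfy (WG1), (WG2'), and (WG3). Then δ satisfies (WG2): for all composable edges g, h, δ(gh) ≥ δ(g)δ(h) in the Bruhat order. -/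
open CategoryTheory List

variable {B : Type*} {W : Type*} [Group W] {M : CoxeterMatrix B}
variable {G : Type*} [Groupoid G]

/-!
Every edge `h` admits a geodesic: peeling off last edges with (WG3) writes `h` as a gallery
of type `ω`, a reduced word for `δ h`, after an edge of `δ`-value `1`, and such edges do not
change `δ`. By (WG2'), composing `g` with this gallery moves `δ g` along `ω`, each letter `s`
either multiplying by `s` or, when `s` is a right descent, staying put. Such a walk ends above
`δ g * δ h` in the chain definition of the Bruhat order, because skipping a letter `s` in front of
a reduced tail `b` from a point `a` with `a s > a` is a step `a b < a s b`. The strong exchange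
condition, proved with the reflection cocycle of the Björner–Brenti reflection representation,
turns such chains into the subword property.
-/

lemma ZMod.eq_zero_or_one (x : ZMod 2) : x = 0 ∨ x = 1 := by
  revert x
  decide

lemma mul_mul_inv_eq_iff_eq_inv_mul_mul {H : Type*} [Group H] (a w x : H) :
    a * w * a⁻¹ = x ↔ w = a⁻¹ * x * a := by
  constructor <;> rintro rfl <;> group

namespace CoxeterSystem

variable (cs : CoxeterSystem M W)

local prefix:100 "s " => cs.simple
local prefix:100 "π " => cs.wordProd
local prefix:100 "ℓ " => cs.length
local prefix:100 "ris " => cs.rightInvSeq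

lemma simple_mul_mul_simple_eq_simple_iff (i : B) (w : W) : s i * w * s i = s i ↔ w = s i := by
  constructor
  · intro h
    simpa [mul_assoc] using congrArg (fun x => s i * x * s i) h
  · rintro rfl
    simp

-- The action of `s i` in the reflection representation of Björner–Brenti (Thm. 1.4.3), here on
-- all of `W × ZMod 2` rather than only on reflections.
open scoped Classical in
noncomputable def simpleReflPerm (i : B) : Equiv.Perm (W × ZMod 2) :=
  Function.Involutive.toPerm (fun p => (s i * p.1 * s i, p.2 + if p.1 = s i then 1 else 0)) <| by
    rintro ⟨w, ε⟩
    refine Prod.ext ?_ ?_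
    · simp [mul_assoc]
    · simp only [simple_mul_mul_simple_eq_simple_iff, add_assoc, CharTwo.add_self_eq_zero, add_zero]

open scoped Classical in
lemma simpleReflPerm_apply (i : B) (w : W) (ε : ZMod 2) :
    cs.simpleReflPerm i (w, ε) = (s i * w * s i, ε + if w = s i then 1 else 0) := rfl

open scoped Classical in
lemma prod_map_simpleReflPerm_apply (ω : List B) (w : W) (ε : ZMod 2) :
    (ω.map cs.simpleReflPerm).prod (w, ε) = (π ω * w * (π ω)⁻¹, ε + (ris ω).count w) := by
  induction ω generalizing w ε with
  | nil => simp [wordProd]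
  | cons i ω ih =>
    simp only [List.map_cons, List.prod_cons, Equiv.Perm.mul_apply, ih, simpleReflPerm_apply]
    refine Prod.ext ?_ ?_
    · simp [wordProd_cons, mul_assoc]
    · simp only [rightInvSeq, count_cons, beq_iff_eq, Nat.cast_add, Nat.cast_ite, Nat.cast_one,
        Nat.cast_zero]
      rw [add_assoc, mul_mul_inv_eq_iff_eq_inv_mul_mul, eq_comm (a := w)]

lemma simple_mul_simple_inv_mul_simple (i j : B) : (s i * s j)⁻¹ * s j = s j * (s i * s j) := by
  simp [mul_assoc]

open scoped Classical in
lemma simpleReflPerm_mul_pow_apply (i j : B) (n : ℕ) (w : W) (ε : ZMod 2) :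
    ((cs.simpleReflPerm i * cs.simpleReflPerm j) ^ n) (w, ε) =
      ((s i * s j) ^ n * w * ((s i * s j) ^ n)⁻¹,
        ε + ∑ r ∈ Finset.range (2 * n), if w = s j * (s i * s j) ^ r then 1 else 0) := by
  induction n generalizing w ε with
  | zero => simp
  | succ n ih =>
    rw [pow_succ, Equiv.Perm.mul_apply, Equiv.Perm.mul_apply, simpleReflPerm_apply,
      simpleReflPerm_apply, ih, mul_add, mul_one, Finset.sum_range_succ', Finset.sum_range_succ']
    refine Prod.ext ?_ ?_
    · simp [pow_succ, mul_assoc]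
    · have shift : ∀ r, (s i * (s j * w * s j) * s i = s j * (s i * s j) ^ r) ↔
          w = s j * (s i * s j) ^ (r + 1 + 1) := fun r => by
        rw [show s i * (s j * w * s j) * s i = (s i * s j) * w * (s i * s j)⁻¹ by simp [mul_assoc],
          mul_mul_inv_eq_iff_eq_inv_mul_mul, ← mul_assoc (s i * s j)⁻¹,
          simple_mul_simple_inv_mul_simple, pow_succ, pow_succ']
        simp only [mul_assoc]
      have one : (s j * w * s j = s i) ↔ w = s j * (s i * s j) ^ (0 + 1) := by
        rw [zero_add, pow_one]
        constructor
        · rintro h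
          rw [← h]
          simp [mul_assoc]
        · rintro rfl
          simp [← mul_assoc]
      simp only [shift, one, pow_zero, mul_one]
      abel

-- For `n = M i j` the summands in `simpleReflPerm_mul_pow_apply` repeat with period `n`, so they
-- cancel in pairs.
lemma isLiftable_simpleReflPerm : M.IsLiftable cs.simpleReflPerm := by
  classical
  intro i j
  refine Equiv.ext fun ⟨w, ε⟩ => ?_
  have hm := cs.simple_mul_simple_pow i j
  generalize M i j = m at hm ⊢
  have period : ∀ r, (s i * s j) ^ (m + r) = (s i * s j) ^ r := fun r => by
    rw [pow_add, hm, one_mul]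
  rw [simpleReflPerm_mul_pow_apply, hm, two_mul, Finset.sum_range_add]
  simp only [period, CharTwo.add_self_eq_zero, add_zero, one_mul, inv_one, mul_one,
    Equiv.Perm.one_apply]

noncomputable def reflRep : W →* Equiv.Perm (W × ZMod 2) :=
  cs.lift ⟨cs.simpleReflPerm, cs.isLiftable_simpleReflPerm⟩

noncomputable def reflCocycle (w t : W) : ZMod 2 := (cs.reflRep w (t, 0)).2

open scoped Classical in
lemma reflRep_wordProd_apply (ω : List B) (t : W) (ε : ZMod 2) :
    cs.reflRep (π ω) (t, ε) = (π ω * t * (π ω)⁻¹, ε + (ris ω).count t) := by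
  rw [← prod_map_simpleReflPerm_apply, wordProd, map_list_prod, List.map_map]
  congr
  funext i
  exact cs.lift_apply_simple _ i

open scoped Classical in
lemma reflCocycle_wordProd (ω : List B) (t : W) : cs.reflCocycle (π ω) t = (ris ω).count t := by
  simp [reflCocycle, reflRep_wordProd_apply]

lemma reflRep_apply (w t : W) (ε : ZMod 2) :
    cs.reflRep w (t, ε) = (w * t * w⁻¹, ε + cs.reflCocycle w t) := by
  classical
  obtain ⟨ω, rfl⟩ := cs.wordProd_surjective w
  rw [reflRep_wordProd_apply, reflCocycle_wordProd]

lemma reflCocycle_mul (u v t : W) :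
    cs.reflCocycle (u * v) t = cs.reflCocycle v t + cs.reflCocycle u (v * t * v⁻¹) := by
  rw [reflCocycle, map_mul, Equiv.Perm.mul_apply, reflRep_apply cs v, reflRep_apply cs u, zero_add]

lemma reflCocycle_one (t : W) : cs.reflCocycle 1 t = 0 := by
  simp [reflCocycle]

lemma reflCocycle_simple_self (i : B) : cs.reflCocycle (s i) (s i) = 1 := by
  simpa using cs.reflCocycle_wordProd [i] (s i)

lemma reflCocycle_inv (w t : W) : cs.reflCocycle w⁻¹ t = cs.reflCocycle w (w⁻¹ * t * w) := by
  have := cs.reflCocycle_mul w w⁻¹ t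
  rwa [mul_inv_cancel, reflCocycle_one, inv_inv, eq_comm, CharTwo.add_eq_zero] at this

lemma IsReflection.reflCocycle_self {t : W} (ht : cs.IsReflection t) : cs.reflCocycle t t = 1 := by
  obtain ⟨u, i, rfl⟩ := ht
  have hconj : u⁻¹ * (u * s i * u⁻¹) * u = s i := by group
  rw [reflCocycle_mul, reflCocycle_inv, inv_inv, hconj, reflCocycle_mul, mul_inv_cancel_right,
    reflCocycle_simple_self, add_left_comm, CharTwo.add_self_eq_zero, add_zero]

lemma mem_rightInvSeq_of_reflCocycle_eq_one {ω : List B} {t : W}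
    (h : cs.reflCocycle (π ω) t = 1) : t ∈ ris ω := by
  classical
  rw [reflCocycle_wordProd] at h
  rw [← List.count_pos_iff]
  by_contra! h0
  simp_all

lemma isRightInversion_of_reflCocycle_eq_one {w t : W} (h : cs.reflCocycle w t = 1) :
    cs.IsRightInversion w t := by
  obtain ⟨ω, hω, rfl⟩ := cs.exists_isReduced w
  exact cs.isRightInversion_of_mem_rightInvSeq hω (cs.mem_rightInvSeq_of_reflCocycle_eq_one h)

lemma reflCocycle_eq_one_iff {w t : W} : cs.reflCocycle w t = 1 ↔ cs.IsRightInversion w t := by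
  refine ⟨cs.isRightInversion_of_reflCocycle_eq_one, ?_⟩
  rintro ⟨ht, hlt⟩
  by_contra h
  have key := cs.reflCocycle_mul (w * t) t t
  rw [mul_inv_cancel_right, mul_assoc, ht.mul_self, mul_one, ht.reflCocycle_self] at key
  have hwt : cs.reflCocycle (w * t) t = 1 := by
    refine (ZMod.eq_zero_or_one _).resolve_left fun h0 => h ?_
    rw [key, h0, add_zero]
  have := (cs.isRightInversion_of_reflCocycle_eq_one hwt).2
  rw [mul_assoc, ht.mul_self, mul_one] at this
  omega

lemma exists_wordProd_eraseIdx_eq_mul {ω : List B} {t : W} (ht : cs.IsRightInversion (π ω) t) :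
    ∃ j, π (ω.eraseIdx j) = π ω * t := by
  obtain ⟨j, hj, rfl⟩ := List.mem_iff_getElem.mp
    (cs.mem_rightInvSeq_of_reflCocycle_eq_one (cs.reflCocycle_eq_one_iff.mpr ht))
  exact ⟨j, by rw [← wordProd_mul_getD_rightInvSeq, List.getD_eq_getElem]⟩

def BruhatStep (v w : W) : Prop := ∃ t, cs.IsReflection t ∧ v * t = w ∧ ℓ v < ℓ w

lemma exists_sublist_wordProd_eq_of_reflTransGen {v w : W}
    (h : Relation.ReflTransGen cs.BruhatStep v w) {ω : List B} (hω : π ω = w) :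
    ∃ σ, σ.Sublist ω ∧ π σ = v := by
  induction h generalizing ω with
  | refl => exact ⟨ω, List.Sublist.refl ω, hω⟩
  | @tail u _ _ hstep ih =>
    obtain ⟨t, ht, rfl, hlt⟩ := hstep
    have hωt : π ω * t = u := by rw [hω, mul_assoc, ht.mul_self, mul_one]
    obtain ⟨j, hj⟩ := cs.exists_wordProd_eraseIdx_eq_mul (ω := ω) ⟨ht, by rwa [hωt, hω]⟩
    obtain ⟨σ, hσ, rfl⟩ := ih (hj.trans hωt)
    exact ⟨σ, hσ.trans (ω.eraseIdx_sublist j), rfl⟩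

lemma bruhatLE_of_reflTransGen {v w : W} (h : Relation.ReflTransGen cs.BruhatStep v w) :
    BruhatLE cs v w := by
  obtain ⟨ω, hω, rfl⟩ := cs.exists_isReduced w
  obtain ⟨σ, hσ, rfl⟩ := cs.exists_sublist_wordProd_eq_of_reflTransGen h rfl
  exact ⟨ω, hω, rfl, σ, hσ, rfl⟩

-- The reflection is `t = b⁻¹ * s i * b`, and the cocycle identity gives
-- `reflCocycle (a * s i * b) t = reflCocycle (s i * b) t + reflCocycle a (s i) = 1 + 0`.
lemma bruhatStep_mul_mul_simple_mul {a b : W} {i : B} (ha : ¬ cs.IsRightDescent a i)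
    (hb : ¬ cs.IsLeftDescent b i) : cs.BruhatStep (a * b) (a * s i * b) := by
  set t := b⁻¹ * s i * b
  have ht : cs.IsReflection t := ⟨b⁻¹, i, by rw [inv_inv]⟩
  have hsb : cs.IsRightInversion (s i * b) t := by
    refine ⟨ht, ?_⟩
    rw [show s i * b * t = b by simp [t, mul_assoc]]
    have := cs.length_simple_mul_ne b i
    unfold IsLeftDescent at hb
    omega
  have ha' : cs.reflCocycle a (s i) = 0 := (ZMod.eq_zero_or_one _).resolve_right fun h =>
    ha ((cs.isRightInversion_simple_iff_isRightDescent a i).mp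
      (cs.isRightInversion_of_reflCocycle_eq_one h))
  have hasb : cs.IsRightInversion (a * s i * b) t := by
    rw [← cs.reflCocycle_eq_one_iff, mul_assoc, reflCocycle_mul, cs.reflCocycle_eq_one_iff.mpr hsb,
      show s i * b * t * (s i * b)⁻¹ = s i by simp [t, mul_assoc], ha', add_zero]
  refine ⟨t, ht, by simp [t, mul_assoc], ?_⟩
  simpa [t, mul_assoc] using hasb.2

-- The values `δ h` allowed by (WG2') when `δ g = w` and `δ (g⁻¹ ≫ h) = s i`: the support of
-- `T_w T_{s_i}` in the Hecke algebra.
def HeckeStep (w : W) (i : B) (u : W) : Prop := u = w * s i ∨ (u = w ∧ cs.IsRightDescent w i)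

variable {cs} in
lemma HeckeStep.eq_mul_simple {w u : W} {i : B} (h : cs.HeckeStep w i u)
    (hu : ¬ cs.IsRightDescent u i) : u = w * s i :=
  h.resolve_right fun ⟨hu', hw⟩ => hu (hu' ▸ hw)

variable {cs} in
lemma HeckeStep.eq_simple_of_eq_one {w : W} {i : B} (h : cs.HeckeStep w i 1) : w = s i := by
  have := h.eq_mul_simple (cs.not_isRightDescent_one i)
  rwa [eq_comm, mul_eq_one_iff_eq_inv, inv_simple] at this

inductive HeckeWalk : W → List B → W → Prop
  | nil (w : W) : HeckeWalk w [] w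
  | cons {w w' u : W} {i : B} {ω : List B} :
      cs.HeckeStep w i w' → HeckeWalk w' ω u → HeckeWalk w (i :: ω) u

variable {cs} in
lemma HeckeWalk.append_singleton {w u u' : W} {ω : List B} {i : B} (h : cs.HeckeWalk w ω u)
    (hu : cs.HeckeStep u i u') : cs.HeckeWalk w (ω ++ [i]) u' := by
  induction h with
  | nil w => exact .cons hu (.nil u')
  | cons hw _ ih => exact .cons hw (ih hu)

variable {cs} in
lemma not_isLeftDescent_of_isReduced_cons {i : B} {ω : List B} (h : cs.IsReduced (i :: ω)) :
    ¬ cs.IsLeftDescent (π ω) i := by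
  have := cs.length_wordProd_le ω
  unfold IsLeftDescent
  rw [← wordProd_cons, h.eq, List.length_cons]
  omega

variable {cs} in
lemma HeckeWalk.reflTransGen_bruhatStep {w u : W} {ω : List B} (h : cs.HeckeWalk w ω u)
    (hω : cs.IsReduced ω) : Relation.ReflTransGen cs.BruhatStep (w * π ω) u := by
  induction h with
  | nil w => simpa [wordProd] using .refl
  | @cons w₀ w₁ u i ω hs _ ih =>
    have hrest := ih (hω.drop 1)
    rw [wordProd_cons, ← mul_assoc]
    rcases hs with h | ⟨h, hdesc⟩ <;> rw [h] at hrest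
    · exact hrest
    · refine .head ?_ hrest
      have := cs.bruhatStep_mul_mul_simple_mul (a := w₀ * s i)
        (cs.isRightDescent_iff_not_isRightDescent_mul.mp hdesc)
        (not_isLeftDescent_of_isReduced_cons hω)
      rwa [simple_mul_simple_cancel_right] at this

end CoxeterSystem

section WDistance

variable (cs : CoxeterSystem M W) {δ : ∀ ⦃x y : G⦄, (x ⟶ y) → W}

local prefix:100 "s " => cs.simple
local prefix:100 "π " => cs.wordProd

lemma heckeStep_of_delta_inv_comp (h2 : WG2' cs δ) {x y z : G} (g : x ⟶ y) (h : x ⟶ z) {i : B}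
    (hgh : δ (Groupoid.inv g ≫ h) = s i) : cs.HeckeStep (δ g) i (δ h) := by
  obtain ⟨hdesc, hasc⟩ := h2 g h i hgh
  by_cases hd : cs.IsRightDescent (δ g) i
  · exact (hdesc hd).elim (fun e => .inr ⟨e, hd⟩) .inl
  · exact .inl (hasc hd)

lemma delta_inv_eq_simple (h1 : WG1 δ) (h2 : WG2' cs δ) {x y : G} (e : x ⟶ y) {i : B}
    (he : δ e = s i) : δ (Groupoid.inv e) = s i := by
  have := heckeStep_of_delta_inv_comp cs h2 (Groupoid.inv e) (𝟙 y) (by simpa using he)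
  rw [h1] at this
  exact this.eq_simple_of_eq_one

lemma delta_eq_of_delta_inv_comp_eq_one (h2 : WG2' cs δ) (h3 : WG3 cs δ) {x y z : G}
    (g : x ⟶ y) (c : x ⟶ z) (hgc : δ (Groupoid.inv g ≫ c) = 1) (hc : δ c ≠ 1) : δ c = δ g := by
  obtain ⟨i, hi⟩ := cs.exists_rightDescent_of_ne_one hc
  obtain ⟨_, f, hfc, hf⟩ := h3 c i hi
  have hgf : δ (Groupoid.inv g ≫ f) = s i := by
    have := heckeStep_of_delta_inv_comp cs h2 (Groupoid.inv g ≫ f) (Groupoid.inv g ≫ c)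
      (by simpa using hfc)
    rw [hgc] at this
    exact this.eq_simple_of_eq_one
  have hfg := (heckeStep_of_delta_inv_comp cs h2 g f hgf).eq_mul_simple
    (by rw [hf]; exact cs.isRightDescent_iff_not_isRightDescent_mul.mp hi)
  exact mul_right_cancel (hf.symm.trans hfg)

lemma delta_inv_eq_one (h1 : WG1 δ) (h2 : WG2' cs δ) (h3 : WG3 cs δ) {x y : G} (a : x ⟶ y)
    (ha : δ a = 1) : δ (Groupoid.inv a) = 1 := by
  by_contra hne
  obtain ⟨i, hi⟩ := cs.exists_rightDescent_of_ne_one hne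
  obtain ⟨_, f, hfa, hf⟩ := h3 (Groupoid.inv a) i hi
  by_cases hf' : δ (Groupoid.inv f) = 1
  · have hf1 : δ f = 1 := by
      simpa using delta_inv_eq_one h1 h2 h3 (Groupoid.inv f) hf'
    rw [hf1, eq_comm, mul_eq_one_iff_eq_inv, cs.inv_simple] at hf
    have := delta_inv_eq_simple cs h1 h2 _ hf
    rw [show Groupoid.inv (Groupoid.inv a) = a by simp, ha] at this
    simpa using congrArg cs.length this
  · have hfi := delta_eq_of_delta_inv_comp_eq_one cs h2 h3 (Groupoid.inv f ≫ Groupoid.inv a)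
      (Groupoid.inv f) (by simpa using ha) hf'
    rw [hfa] at hfi
    have := delta_inv_eq_simple cs h1 h2 _ hfi
    rw [show Groupoid.inv (Groupoid.inv f) = f by simp, hf, mul_eq_right] at this
    exact hne this
termination_by cs.length (δ (Groupoid.inv a))
decreasing_by simpa [hf, CoxeterSystem.IsRightDescent] using hi

lemma delta_comp_eq_of_delta_eq_one (h1 : WG1 δ) (h2 : WG2' cs δ) (h3 : WG3 cs δ) {x y z : G}
    (g : x ⟶ y) (a : y ⟶ z) (ha : δ a = 1) : δ (g ≫ a) = δ g := by
  by_cases hga : δ (g ≫ a) = 1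
  · by_contra hne
    refine hne (delta_eq_of_delta_inv_comp_eq_one cs h2 h3 (g ≫ a) g ?_ ?_).symm
    · simpa using delta_inv_eq_one cs h1 h2 h3 a ha
    · rw [hga] at hne
      exact Ne.symm hne
  · exact delta_eq_of_delta_inv_comp_eq_one cs h2 h3 g (g ≫ a) (by simpa using ha) hga

lemma exists_isReduced_heckeWalk (h1 : WG1 δ) (h2 : WG2' cs δ) (h3 : WG3 cs δ) {y z : G}
    (h : y ⟶ z) : ∃ ω : List B, cs.IsReduced ω ∧ π ω = δ h ∧
      ∀ {x : G} (g : x ⟶ y), cs.HeckeWalk (δ g) ω (δ (g ≫ h)) := by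
  by_cases hh : δ h = 1
  · refine ⟨[], by simp [CoxeterSystem.IsReduced], by simp [hh, CoxeterSystem.wordProd],
      fun g => ?_⟩
    rw [delta_comp_eq_of_delta_eq_one cs h1 h2 h3 g h hh]
    exact .nil _
  obtain ⟨i, hi⟩ := cs.exists_rightDescent_of_ne_one hh
  obtain ⟨_, f, hfh, hf⟩ := h3 h i hi
  obtain ⟨ω, hω, hωf, hwalk⟩ := exists_isReduced_heckeWalk h1 h2 h3 f
  have hprod : π (ω ++ [i]) = δ h := by
    rw [cs.wordProd_append, cs.wordProd_singleton, hωf, hf, cs.simple_mul_simple_cancel_right]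
  refine ⟨ω ++ [i], ?_, hprod, fun g => (hwalk g).append_singleton ?_⟩
  · have := cs.length_mul_simple (δ h) i
    unfold CoxeterSystem.IsReduced CoxeterSystem.IsRightDescent at *
    rw [hprod, List.length_append, ← hω, hωf, hf, List.length_singleton]
    omega
  · exact heckeStep_of_delta_inv_comp cs h2 (g ≫ f) (g ≫ h) (by simpa using hfh)
termination_by cs.length (δ h)
decreasing_by simpa [hf, CoxeterSystem.IsRightDescent] using hi

end WDistance

/-- If `δ` satisfies (WG1), (WG2'), and (WG3), then `δ` satisfies the triangle
inequality (WG2). -/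
theorem stmt9 (cs : CoxeterSystem M W) (δ : ∀ ⦃x y : G⦄, (x ⟶ y) → W)
    (h1 : WG1 δ) (h2 : WG2' cs δ) (h3 : WG3 cs δ) :
    WG2 cs δ := by
  intro x y z g h
  obtain ⟨ω, hω, hωh, hwalk⟩ := exists_isReduced_heckeWalk cs h1 h2 h3 h
  have hchain := (hwalk g).reflTransGen_bruhatStep hω
  rw [hωh] at hchain
  exact cs.bruhatLE_of_reflTransGen hchain
end
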